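/- Let Ω be an ε-uniform domain with admissible Whitney covering W, and let s > 0. For every Q ∈ W, Σ over L ∈ W such that Q ∈ SH(L) of ℓ(L)^{−s} ≤ C ℓ(Q)^{−s}, where C depends on d, ε, s. -/
import Mathlib


open MeasureTheory ENNReal

/-- An axis-parallel cube in `ℝ^d`, identified with the closed ball of radius `side/2`
around its center in the sup metric on `Fin d → ℝ`. -/
structure Cube (d : ℕ) where
  center : Fin d → ℝ
  side : ℝ
  side_pos : 0 < side

/-- The set of points of a cube. -/
def Cube.toSet {d : ℕ} (Q : Cube d) : Set (Fin d → ℝ) :=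
  Metric.closedBall Q.center (Q.side / 2)

/-- Distance between two sets. -/
noncomputable def setDist {d : ℕ} (A B : Set (Fin d → ℝ)) : ℝ :=
  sInf (Set.image2 dist A B)

/-- The long distance `D(Q,S) = ℓ(Q) + ℓ(S) + dist(Q,S)` between two cubes. -/
noncomputable def longDist {d : ℕ} (Q S : Cube d) : ℝ :=
  Q.side + S.side + setDist Q.toSet S.toSet

/-- A Whitney covering of `Ω`: a family of essentially disjoint (dyadic-type) cubes whose
union is `Ω`, with side-lengths comparable to the distance to `∂Ω`, and finite
superposition of the dilated cubes `50Q`. -/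
structure WhitneyCovering (d : ℕ) (Ω : Set (Fin d → ℝ)) where
  cubes : Set (Cube d)
  covers : (⋃ Q ∈ cubes, Q.toSet) = Ω
  essDisjoint : ∀ Q ∈ cubes, ∀ S ∈ cubes, Q ≠ S →
    interior Q.toSet ∩ interior S.toSet = ∅
  CW : ℝ
  one_le_CW : 1 ≤ CW
  dist_lb : ∀ Q ∈ cubes, CW * Q.side ≤ setDist Q.toSet (frontier Ω)
  dist_ub : ∀ Q ∈ cubes, setDist Q.toSet (frontier Ω) ≤ 4 * CW * Q.side
  finiteOverlap : ∃ N : ℕ, ∀ x : Fin d → ℝ,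
    {Q ∈ cubes | x ∈ Metric.closedBall Q.center (25 * Q.side)}.Finite ∧
    {Q ∈ cubes | x ∈ Metric.closedBall Q.center (25 * Q.side)}.ncard ≤ N

/-- `S ∈ SH_ρ(P)` : the cube `S` of the covering lies in the `ρ`-shadow of `P`, i.e.
`S ⊆ B(x_P, ρ ℓ(P))`. -/
def memShadow {d : ℕ} {Ω : Set (Fin d → ℝ)} (W : WhitneyCovering d Ω) (ρ : ℝ)
    (S P : Cube d) : Prop :=
  S ∈ W.cubes ∧ P ∈ W.cubes ∧ S.toSet ⊆ Metric.closedBall P.center (ρ * P.side)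

/-- An `ε`-admissible chain of Whitney cubes joining `Q` to `S`. -/
structure AdmissibleChain {d : ℕ} {Ω : Set (Fin d → ℝ)} (W : WhitneyCovering d Ω)
    (ε : ℝ) (Q S : Cube d) where
  M : ℕ
  M_pos : 0 < M
  c : Fin M → Cube d
  mem : ∀ j, c j ∈ W.cubes
  first : c ⟨0, M_pos⟩ = Q
  last : c ⟨M - 1, Nat.sub_lt M_pos Nat.one_pos⟩ = S
  neighbors : ∀ (j : ℕ) (h : j + 1 < M),
    ((c ⟨j, Nat.lt_of_succ_lt h⟩).toSet ∩ (c ⟨j + 1, h⟩).toSet).Nonempty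
  length_le : ∑ j, (c j).side ≤ ε⁻¹ * longDist Q S
  j₀ : Fin M
  growth₁ : ∀ j : Fin M, j ≤ j₀ → ε * longDist Q (c j) ≤ (c j).side
  growth₂ : ∀ j : Fin M, j₀ ≤ j → ε * longDist (c j) S ≤ (c j).side

/-- `Ω` (with Whitney covering `W`) is an `ε`-uniform domain: any two Whitney cubes are
joined by an `ε`-admissible chain. -/
def IsUniformDomain {d : ℕ} {Ω : Set (Fin d → ℝ)} (W : WhitneyCovering d Ω) (ε : ℝ) : Prop :=
  ∀ Q ∈ W.cubes, ∀ S ∈ W.cubes, Nonempty (AdmissibleChain W ε Q S)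

/-- The non-centered Hardy–Littlewood maximal function, taken over cubes
(closed balls in the sup metric on `Fin d → ℝ`) containing `x`. -/
noncomputable def maximal (d : ℕ) (g : (Fin d → ℝ) → ℝ≥0∞) (x : Fin d → ℝ) : ℝ≥0∞ :=
  ⨆ (c : Fin d → ℝ) (r : ℝ) (_ : 0 < r) (_ : x ∈ Metric.closedBall c r),
    (∫⁻ y in Metric.closedBall c r, g y) / volume (Metric.closedBall c r)


namespace Stmt10Aux

open Metric Set MeasureTheory ENNReal

lemma center_mem {d : ℕ} (Q : Cube d) : Q.center ∈ Q.toSet :=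
  Metric.mem_closedBall_self (by linarith [Q.side_pos])

lemma setDist_le {d : ℕ} {A B : Set (Fin d → ℝ)} {a b : Fin d → ℝ}
    (ha : a ∈ A) (hb : b ∈ B) : setDist A B ≤ dist a b := by
  apply csInf_le
  · exact ⟨0, by rintro x ⟨u, hu, v, hv, rfl⟩; exact dist_nonneg⟩
  · exact Set.mem_image2_of_mem ha hb

lemma setDist_lt {d : ℕ} {A B : Set (Fin d → ℝ)} (hA : A.Nonempty) (hB : B.Nonempty)
    {c : ℝ} (h : setDist A B < c) : ∃ a ∈ A, ∃ b ∈ B, dist a b < c := by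
  have hbd : BddBelow (Set.image2 dist A B) :=
    ⟨0, by rintro x ⟨u, hu, v, hv, rfl⟩; exact dist_nonneg⟩
  have hne : (Set.image2 dist A B).Nonempty := hA.image2 hB
  obtain ⟨x, hx, hxc⟩ := (csInf_lt_iff hbd hne).mp h
  obtain ⟨a, ha, b, hb, rfl⟩ := hx
  exact ⟨a, ha, b, hb, hxc⟩

lemma frontier_nonempty {d : ℕ} {Ω : Set (Fin d → ℝ)}
    (hc : IsConnected Ω) (hne : Ω ≠ Set.univ) : (frontier Ω).Nonempty := by
  rw [Set.nonempty_iff_ne_empty]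
  intro h
  have hcl : IsClopen Ω := isClopen_iff_frontier_eq_empty.mpr h
  rcases isClopen_iff.mp hcl with h1 | h1
  · exact hc.nonempty.ne_empty h1
  · exact hne h1

lemma side_le {d : ℕ} {Ω : Set (Fin d → ℝ)} {ρ : ℝ} (hρ : 1 < ρ)
    (W : WhitneyCovering d Ω) (hF : (frontier Ω).Nonempty)
    {Q L : Cube d} (h : memShadow W ρ Q L) : Q.side ≤ (ρ + 9/2) * L.side := by
  obtain ⟨hQ, hL, hsub⟩ := h
  have hLpos := L.side_pos
  have hQpos := Q.side_pos
  have hcw := W.one_le_CW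
  by_contra hcon
  push_neg at hcon
  set η := Q.side - (ρ + 9/2) * L.side with hηdef
  have hηpos : 0 < η := by simp only [hηdef]; linarith
  have h1 : setDist L.toSet (frontier Ω) < 4 * W.CW * L.side + η / 2 :=
    lt_of_le_of_lt (W.dist_ub L hL) (by linarith)
  obtain ⟨y, hy, z, hz, hyz⟩ := setDist_lt ⟨L.center, center_mem L⟩ hF h1
  have h2 : W.CW * Q.side ≤ dist Q.center z :=
    (W.dist_lb Q hQ).trans (setDist_le (center_mem Q) hz)
  have h3 : dist Q.center L.center ≤ ρ * L.side := by
    have := hsub (center_mem Q)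
    rwa [Metric.mem_closedBall] at this
  have h4 : dist L.center y ≤ L.side / 2 := by
    rw [dist_comm]; exact hy
  have h5 : dist Q.center z ≤ dist Q.center L.center + dist L.center y + dist y z :=
    dist_triangle4 _ _ _ _
  have hch : W.CW * Q.side ≤ ρ * L.side + L.side / 2 + (4 * W.CW * L.side + η / 2) := by
    linarith
  have p1 : 0 ≤ (W.CW - 1) * (ρ * L.side) :=
    mul_nonneg (by linarith) (by positivity)
  have p2 : 0 ≤ (W.CW - 1) * L.side := mul_nonneg (by linarith) hLpos.le
  have p3 : 0 ≤ (W.CW - 1) * η := mul_nonneg (by linarith) hηpos.le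
  nlinarith [hch, p1, p2, p3]

lemma g_measurable {d : ℕ} (q t : ℝ) (hq : 0 < q) (x0 : Fin d → ℝ) :
    Measurable fun x : Fin d → ℝ => ENNReal.ofReal ((q + dist x x0) ^ (-t)) := by
  apply Measurable.ennreal_ofReal
  apply Continuous.measurable
  apply Continuous.rpow_const
  · exact continuous_const.add (continuous_id.dist continuous_const)
  · intro x
    left
    have := dist_nonneg (x := x) (y := x0)
    positivity

lemma key_lb {d : ℕ} {Ω : Set (Fin d → ℝ)} {ρ s : ℝ} (hρ : 1 < ρ) (hs : 0 < s)
    (hd : 1 ≤ d) (W : WhitneyCovering d Ω) (hF : (frontier Ω).Nonempty)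
    {Q L : Cube d} (h : memShadow W ρ Q L) :
    ENNReal.ofReal (L.side ^ (-s)) ≤ ENNReal.ofReal ((2*ρ+5) ^ (s + (d:ℝ))) *
      ∫⁻ x in interior L.toSet,
        ENNReal.ofReal ((Q.side + dist x Q.center) ^ (-(s + (d:ℝ)))) := by
  haveI : Nonempty (Fin d) := ⟨⟨0, hd⟩⟩
  have hLpos := L.side_pos
  have hQpos := Q.side_pos
  have hBpos : (0:ℝ) < 2*ρ+5 := by linarith
  have htpos : (0:ℝ) < s + (d:ℝ) := by positivity
  set t := s + (d:ℝ) with ht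
  -- interior of the cube is the open ball
  have hint : interior L.toSet = Metric.ball L.center (L.side / 2) := by
    unfold Cube.toSet
    exact interior_closedBall _ (by positivity)
  -- pointwise lower bound on the ball
  have hpt : ∀ x ∈ Metric.ball L.center (L.side / 2),
      ENNReal.ofReal (((2*ρ+5) * L.side) ^ (-t)) ≤
        ENNReal.ofReal ((Q.side + dist x Q.center) ^ (-t)) := by
    intro x hx
    apply ENNReal.ofReal_le_ofReal
    have hd0 : (0:ℝ) ≤ dist x Q.center := dist_nonneg
    apply Real.rpow_le_rpow_of_nonpos (by linarith) _ (by linarith)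
    have h1 : dist x L.center ≤ L.side / 2 := le_of_lt (Metric.mem_ball.mp hx)
    have h2 : dist L.center Q.center ≤ ρ * L.side := by
      rw [dist_comm]
      have := h.2.2 (center_mem Q)
      rwa [Metric.mem_closedBall] at this
    have h3 := side_le hρ W hF h
    have h4 := dist_triangle x L.center Q.center
    nlinarith
  -- integral lower bound
  have hvol : volume (Metric.ball L.center (L.side / 2)) = ENNReal.ofReal (L.side ^ (d:ℕ)) := by
    rw [Real.volume_pi_ball _ (by positivity)]
    rw [show (2 * (L.side / 2)) = L.side by ring, Fintype.card_fin]
  have hinteg : ENNReal.ofReal (((2*ρ+5) * L.side) ^ (-t)) * ENNReal.ofReal (L.side ^ (d:ℕ)) ≤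
      ∫⁻ x in interior L.toSet,
        ENNReal.ofReal ((Q.side + dist x Q.center) ^ (-t)) := by
    rw [hint, ← hvol, ← setLIntegral_const]
    exact setLIntegral_mono (g_measurable Q.side t hQpos Q.center) hpt
  calc ENNReal.ofReal (L.side ^ (-s))
      = ENNReal.ofReal ((2*ρ+5) ^ t) *
        (ENNReal.ofReal (((2*ρ+5) * L.side) ^ (-t)) * ENNReal.ofReal (L.side ^ (d:ℕ))) := by
        rw [← ENNReal.ofReal_mul (by positivity), ← ENNReal.ofReal_mul (by positivity)]
        congr 1
        rw [Real.mul_rpow hBpos.le hLpos.le, ← Real.rpow_natCast L.side d]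
        rw [show (2*ρ+5) ^ t * ((2*ρ+5) ^ (-t) * L.side ^ (-t) * L.side ^ (d:ℝ)) =
          ((2*ρ+5) ^ t * (2*ρ+5) ^ (-t)) * (L.side ^ (-t) * L.side ^ (d:ℝ)) by ring]
        rw [← Real.rpow_add hBpos, ← Real.rpow_add hLpos, add_neg_cancel, Real.rpow_zero, one_mul]
        congr 1
        rw [ht]; ring
    _ ≤ _ := mul_le_mul_right hinteg _

lemma sum_integrals_le {d : ℕ} {Ω : Set (Fin d → ℝ)} {ρ : ℝ}
    (W : WhitneyCovering d Ω) (Q : Cube d) (g : (Fin d → ℝ) → ℝ≥0∞) :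
    (∑' L : {L : Cube d // memShadow W ρ Q L},
        ∫⁻ x in interior (L : Cube d).toSet, g x) ≤ ∫⁻ x, g x := by
  apply Summable.tsum_le_of_sum_le ENNReal.summable
  intro F
  have hdisj : (↑F : Set {L : Cube d // memShadow W ρ Q L}).PairwiseDisjoint
      (fun i => interior (i : Cube d).toSet) := by
    intro i _ j _ hij
    have hne : (i : Cube d) ≠ (j : Cube d) := fun hc => hij (Subtype.ext hc)
    exact Set.disjoint_iff_inter_eq_empty.mpr
      (W.essDisjoint _ i.2.2.1 _ j.2.2.1 hne)
  have hmeas : ∀ i ∈ F, MeasurableSet (interior (i : Cube d).toSet) :=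
    fun i _ => isOpen_interior.measurableSet
  rw [← lintegral_biUnion_finset hdisj hmeas g]
  exact setLIntegral_le_lintegral _ _

lemma annulus_bound {d : ℕ} (s : ℝ) (hs : 0 < s) (x0 : Fin d → ℝ) {q : ℝ} (hq : 0 < q)
    (k : ℕ) :
    (2 ^ ((k:ℝ)) * q) ^ (-(s + (d:ℝ))) * (2 * (2 ^ (((k+1):ℕ):ℝ) * q)) ^ (d:ℕ) =
      2 ^ (s + 2*(d:ℝ)) * ((2:ℝ) ^ (-s)) ^ ((k+1):ℕ) * q ^ (-s) := by
  have h2 : (0:ℝ) < 2 := two_pos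
  have hb : (0:ℝ) < 2 ^ ((k:ℝ)) := Real.rpow_pos_of_pos h2 _
  push_cast
  rw [show (2:ℝ) * (2 ^ ((k:ℝ)+1) * q) = 2 ^ ((k:ℝ)+2) * q by
        rw [Real.rpow_add h2, Real.rpow_add h2]; norm_num; ring]
  rw [← Real.rpow_natCast ((2:ℝ) ^ ((k:ℝ)+2) * q) d,
      ← Real.rpow_natCast ((2:ℝ)^(-s)) (k+1),
      Real.mul_rpow hb.le hq.le,
      Real.mul_rpow (Real.rpow_pos_of_pos h2 _).le hq.le,
      ← Real.rpow_mul h2.le, ← Real.rpow_mul h2.le, ← Real.rpow_mul h2.le]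
  push_cast
  have e1 : ∀ a b : ℝ, (2:ℝ) ^ a * (2:ℝ) ^ b = 2 ^ (a + b) := fun a b => (Real.rpow_add h2 a b).symm
  have e2 : ∀ a b : ℝ, q ^ a * q ^ b = q ^ (a + b) := fun a b => (Real.rpow_add hq a b).symm
  calc (2:ℝ) ^ ((k:ℝ) * -(s + (d:ℝ))) * q ^ (-(s + (d:ℝ))) * (2 ^ (((k:ℝ) + 2) * (d:ℝ)) * q ^ (d:ℝ))
      = (2 ^ ((k:ℝ) * -(s + (d:ℝ))) * 2 ^ (((k:ℝ) + 2) * (d:ℝ))) *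
          (q ^ (-(s + (d:ℝ))) * q ^ (d:ℝ)) := by ring
    _ = 2 ^ ((k:ℝ) * -(s + (d:ℝ)) + ((k:ℝ) + 2) * (d:ℝ)) * q ^ (-(s + (d:ℝ)) + (d:ℝ)) := by
          rw [e1, e2]
    _ = 2 ^ ((s + 2 * (d:ℝ)) + -s * ((k:ℝ) + 1)) * q ^ (-s) := by
          rw [show (k:ℝ) * -(s + (d:ℝ)) + ((k:ℝ) + 2) * (d:ℝ)
                = (s + 2 * (d:ℝ)) + -s * ((k:ℝ) + 1) by ring,
              show -(s + (d:ℝ)) + (d:ℝ) = -s by ring]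
    _ = 2 ^ (s + 2 * (d:ℝ)) * 2 ^ (-s * ((k:ℝ) + 1)) * q ^ (-s) := by
          rw [Real.rpow_add h2]

lemma integral_ub {d : ℕ} (s : ℝ) (hs : 0 < s) (x0 : Fin d → ℝ) {q : ℝ} (hq : 0 < q) :
    ∫⁻ x, ENNReal.ofReal ((q + dist x x0) ^ (-(s + (d:ℝ)))) ≤
      (ENNReal.ofReal (2 ^ ((d:ℕ):ℝ)) + ENNReal.ofReal (2 ^ (s + 2*(d:ℝ)))) *
        (1 - ENNReal.ofReal (2 ^ (-s)))⁻¹ * ENNReal.ofReal (q ^ (-s)) := by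
  have h2 : (0:ℝ) < 2 := two_pos
  have htpos : (0:ℝ) < s + (d:ℝ) := by positivity
  set t := s + (d:ℝ) with ht
  set c : ℝ≥0∞ := ENNReal.ofReal (2 ^ ((d:ℕ):ℝ)) + ENNReal.ofReal (2 ^ (s + 2*(d:ℝ))) with hc
  set r : ℝ≥0∞ := ENNReal.ofReal ((2:ℝ) ^ (-s)) with hr
  -- the annuli
  set D : ℕ → Set (Fin d → ℝ) := fun k =>
    match k with
    | 0 => Metric.closedBall x0 q
    | (k+1) => Metric.closedBall x0 (2 ^ (((k+1):ℕ):ℝ) * q) \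
        Metric.closedBall x0 (2 ^ ((k:ℕ):ℝ) * q) with hD
  have huniv : (⋃ k, D k) = Set.univ := by
    ext x
    simp only [Set.mem_iUnion, Set.mem_univ, iff_true]
    have hex : ∃ k : ℕ, dist x x0 ≤ 2 ^ ((k:ℕ):ℝ) * q := by
      obtain ⟨k, hk⟩ := pow_unbounded_of_one_lt (dist x x0 / q) (one_lt_two (α := ℝ))
      refine ⟨k, ?_⟩
      rw [Real.rpow_natCast]
      exact ((div_le_iff₀ hq).mp hk.le)
    refine ⟨Nat.find hex, ?_⟩
    rcases hnf : Nat.find hex with _ | m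
    · have hsp := Nat.find_spec hex
      rw [hnf] at hsp
      simp only [Nat.cast_zero, Real.rpow_zero, one_mul] at hsp
      exact hsp
    · constructor
      · have hsp := Nat.find_spec hex
        rw [hnf] at hsp
        exact hsp
      · intro hmem
        have hlt := Nat.find_min hex (by rw [hnf]; exact Nat.lt_succ_self m)
        exact hlt (Metric.mem_closedBall.mp hmem)
  -- per-annulus bound
  have hterm : ∀ k : ℕ, (∫⁻ x in D k, ENNReal.ofReal ((q + dist x x0) ^ (-t))) ≤
      c * r ^ k * ENNReal.ofReal (q ^ (-s)) := by
    intro k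
    match k with
    | 0 =>
      have hb : ∀ x ∈ D 0, ENNReal.ofReal ((q + dist x x0) ^ (-t)) ≤
          ENNReal.ofReal (q ^ (-t)) := by
        intro x _
        exact ENNReal.ofReal_le_ofReal (Real.rpow_le_rpow_of_nonpos hq
          (by have := dist_nonneg (x := x) (y := x0); linarith) (by linarith))
      calc (∫⁻ x in D 0, ENNReal.ofReal ((q + dist x x0) ^ (-t)))
          ≤ ∫⁻ _ in D 0, ENNReal.ofReal (q ^ (-t)) :=
            setLIntegral_mono measurable_const hb
        _ = ENNReal.ofReal (q ^ (-t)) * volume (Metric.closedBall x0 q) := by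
            rw [setLIntegral_const]
        _ = ENNReal.ofReal (q ^ (-t)) * ENNReal.ofReal ((2*q) ^ (d:ℕ)) := by
            rw [Real.volume_pi_closedBall _ hq.le, Fintype.card_fin]
        _ = ENNReal.ofReal (2 ^ ((d:ℕ):ℝ)) * ENNReal.ofReal (q ^ (-s)) := by
            rw [← ENNReal.ofReal_mul (by positivity), ← ENNReal.ofReal_mul (by positivity)]
            congr 1
            rw [← Real.rpow_natCast (2*q) d, Real.mul_rpow h2.le hq.le,
                show q ^ (-t) * ((2:ℝ) ^ ((d:ℕ):ℝ) * q ^ ((d:ℕ):ℝ)) =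
                  (2:ℝ) ^ ((d:ℕ):ℝ) * (q ^ (-t) * q ^ ((d:ℕ):ℝ)) from by ring,
                ← Real.rpow_add hq]
            congr 2
            rw [ht]
            push_cast
            ring
        _ ≤ c * r ^ 0 * ENNReal.ofReal (q ^ (-s)) := by
            rw [pow_zero, mul_one, hc]
            exact mul_le_mul_left le_self_add _
    | (m+1) =>
      have hDsub : D (m+1) ⊆ Metric.closedBall x0 (2 ^ (((m+1):ℕ):ℝ) * q) :=
        Set.diff_subset
      have hb : ∀ x ∈ D (m+1), ENNReal.ofReal ((q + dist x x0) ^ (-t)) ≤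
          ENNReal.ofReal ((2 ^ ((m:ℕ):ℝ) * q) ^ (-t)) := by
        intro x hx
        apply ENNReal.ofReal_le_ofReal
        have hxg : 2 ^ ((m:ℕ):ℝ) * q < dist x x0 := by
          have := hx.2
          simp only [Metric.mem_closedBall, not_le] at this
          exact this
        exact Real.rpow_le_rpow_of_nonpos (by positivity) (by linarith) (by linarith)
      calc (∫⁻ x in D (m+1), ENNReal.ofReal ((q + dist x x0) ^ (-t)))
          ≤ ∫⁻ _ in D (m+1), ENNReal.ofReal ((2 ^ ((m:ℕ):ℝ) * q) ^ (-t)) :=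
            setLIntegral_mono measurable_const hb
        _ = ENNReal.ofReal ((2 ^ ((m:ℕ):ℝ) * q) ^ (-t)) * volume (D (m+1)) := by
            rw [setLIntegral_const]
        _ ≤ ENNReal.ofReal ((2 ^ ((m:ℕ):ℝ) * q) ^ (-t)) *
              volume (Metric.closedBall x0 (2 ^ (((m+1):ℕ):ℝ) * q)) :=
            mul_le_mul_right (measure_mono hDsub) _
        _ = ENNReal.ofReal ((2 ^ ((m:ℕ):ℝ) * q) ^ (-t)) *
              ENNReal.ofReal ((2 * (2 ^ (((m+1):ℕ):ℝ) * q)) ^ (d:ℕ)) := by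
            rw [Real.volume_pi_closedBall _ (by positivity), Fintype.card_fin]
        _ = ENNReal.ofReal (2 ^ (s + 2*(d:ℝ)) * ((2:ℝ) ^ (-s)) ^ ((m+1):ℕ) * q ^ (-s)) := by
            rw [← ENNReal.ofReal_mul (by positivity)]
            congr 1
            exact annulus_bound s hs x0 hq m
        _ = ENNReal.ofReal (2 ^ (s + 2*(d:ℝ))) * r ^ (m+1) * ENNReal.ofReal (q ^ (-s)) := by
            rw [ENNReal.ofReal_mul (by positivity), ENNReal.ofReal_mul (by positivity),
                ENNReal.ofReal_pow (by positivity)]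
        _ ≤ c * r ^ (m+1) * ENNReal.ofReal (q ^ (-s)) := by
            rw [hc]
            exact mul_le_mul_left (mul_le_mul_left le_add_self _) _
  -- put it together
  calc ∫⁻ x, ENNReal.ofReal ((q + dist x x0) ^ (-t))
      = ∫⁻ x in ⋃ k, D k, ENNReal.ofReal ((q + dist x x0) ^ (-t)) := by
        rw [huniv, setLIntegral_univ]
    _ ≤ ∑' k, ∫⁻ x in D k, ENNReal.ofReal ((q + dist x x0) ^ (-t)) :=
        lintegral_iUnion_le D _
    _ ≤ ∑' k : ℕ, c * r ^ k * ENNReal.ofReal (q ^ (-s)) := ENNReal.tsum_le_tsum hterm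
    _ = (∑' k : ℕ, c * r ^ k) * ENNReal.ofReal (q ^ (-s)) := ENNReal.tsum_mul_right
    _ = c * (1 - r)⁻¹ * ENNReal.ofReal (q ^ (-s)) := by
        rw [ENNReal.tsum_mul_left, ENNReal.tsum_geometric]

end Stmt10Aux

/-- if `Ω` is an `ε`-uniform domain with admissible Whitney covering `W` and
`s > 0`, then for every `Q ∈ W`,
`Σ_{L ∈ W, Q ∈ SH(L)} ℓ(L)^{−s} ≤ C ℓ(Q)^{−s}`, with `C` depending on `d`, `ε`, `s`
(and the shadow parameter `ρ`). -/
theorem stmt_10 (d : ℕ) (hd : 1 ≤ d) (ε s ρ : ℝ) (hε : 0 < ε) (hs : 0 < s) (hρ : 1 < ρ) :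
    ∃ C : ℝ≥0∞, C ≠ ⊤ ∧
      ∀ (Ω : Set (Fin d → ℝ)), IsOpen Ω → IsConnected Ω → Ω ≠ Set.univ →
      ∀ (W : WhitneyCovering d Ω), IsUniformDomain W ε →
      ∀ Q : Cube d, Q ∈ W.cubes →
      (∑' L : {L : Cube d // memShadow W ρ Q L},
          ENNReal.ofReal ((L : Cube d).side ^ (-s))) ≤
        C * ENNReal.ofReal (Q.side ^ (-s)) := by
  classical
  refine ⟨ENNReal.ofReal ((2*ρ+5) ^ (s + (d:ℝ))) *
    ((ENNReal.ofReal ((2:ℝ) ^ ((d:ℕ):ℝ)) + ENNReal.ofReal ((2:ℝ) ^ (s + 2*(d:ℝ)))) *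
      (1 - ENNReal.ofReal ((2:ℝ) ^ (-s)))⁻¹), ?_, ?_⟩
  · have hr1 : ENNReal.ofReal ((2:ℝ) ^ (-s)) < 1 :=
      ENNReal.ofReal_lt_one.mpr (Real.rpow_lt_one_of_one_lt_of_neg one_lt_two (by linarith))
    have hinv : (1 - ENNReal.ofReal ((2:ℝ) ^ (-s)))⁻¹ ≠ ⊤ :=
      ENNReal.inv_ne_top.mpr (fun hz => absurd (tsub_eq_zero_iff_le.mp hz) (not_le.mpr hr1))
    exact ENNReal.mul_ne_top ENNReal.ofReal_ne_top
      (ENNReal.mul_ne_top (by finiteness) hinv)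
  · intro Ω hΩo hΩc hΩu W hU Q hQ
    have hF := Stmt10Aux.frontier_nonempty hΩc hΩu
    calc (∑' L : {L : Cube d // memShadow W ρ Q L}, ENNReal.ofReal ((L : Cube d).side ^ (-s)))
        ≤ ∑' L : {L : Cube d // memShadow W ρ Q L},
            ENNReal.ofReal ((2*ρ+5) ^ (s + (d:ℝ))) *
            ∫⁻ x in interior (L : Cube d).toSet,
              ENNReal.ofReal ((Q.side + dist x Q.center) ^ (-(s + (d:ℝ)))) :=
          ENNReal.tsum_le_tsum (fun L => Stmt10Aux.key_lb hρ hs hd W hF L.2)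
      _ = ENNReal.ofReal ((2*ρ+5) ^ (s + (d:ℝ))) *
            ∑' L : {L : Cube d // memShadow W ρ Q L},
              ∫⁻ x in interior (L : Cube d).toSet,
                ENNReal.ofReal ((Q.side + dist x Q.center) ^ (-(s + (d:ℝ)))) :=
          ENNReal.tsum_mul_left
      _ ≤ ENNReal.ofReal ((2*ρ+5) ^ (s + (d:ℝ))) *
            ∫⁻ x, ENNReal.ofReal ((Q.side + dist x Q.center) ^ (-(s + (d:ℝ)))) :=
          mul_le_mul_right (Stmt10Aux.sum_integrals_le W Q _) _
      _ ≤ ENNReal.ofReal ((2*ρ+5) ^ (s + (d:ℝ))) *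
            ((ENNReal.ofReal ((2:ℝ) ^ ((d:ℕ):ℝ)) + ENNReal.ofReal ((2:ℝ) ^ (s + 2*(d:ℝ)))) *
              (1 - ENNReal.ofReal ((2:ℝ) ^ (-s)))⁻¹ * ENNReal.ofReal (Q.side ^ (-s))) :=
          mul_le_mul_right (Stmt10Aux.integral_ub s hs Q.center Q.side_pos) _
      _ = ENNReal.ofReal ((2*ρ+5) ^ (s + (d:ℝ))) *
            ((ENNReal.ofReal ((2:ℝ) ^ ((d:ℕ):ℝ)) + ENNReal.ofReal ((2:ℝ) ^ (s + 2*(d:ℝ)))) *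
              (1 - ENNReal.ofReal ((2:ℝ) ^ (-s)))⁻¹) * ENNReal.ofReal (Q.side ^ (-s)) := by
          ring
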